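/- arXiv:2506.04618 — 3 statements merged into one kernel-verified Lean document; each statement's English description precedes it below -/
import Mathlib

section
/- Let β > 0. Let f = h + conj(g) be a harmonic K-quasiregular mapping on the unit disk 𝔻 (so h, g are holomorphic on 𝔻 and |g'(z)| ≤ k·|h'(z)| on 𝔻 for some k ∈ [0,1)), and write u = Re f, v = Im f. If there is a constant C > 0 such that sup_{|z|=r} |u(z)| ≤ C·(1-r)^{-β} for all r ∈ [0,1), then there is a constant C' > 0 such that sup_{|z|=r} |v(z)| ≤ C'·(1-r)^{-β} for all r ∈ [0,1). -/
/-!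
Writing `f = h + conj g`, one has `Re f = Re (h + g)` and `Im f = Im (h - g)`. Growth
`(1 - r)^(-β)` of the real part of the holomorphic `h + g` gives, by Borel–Carathéodory and
Cauchy's estimate on discs of radius `(1 - |w|) / 2`, growth `(1 - |w|)^(-β-1)` of `h' + g'`.
Quasiregularity gives `|h' - g'| ≤ (1 + k) / (1 - k) |h' + g'|`, and integrating along radii
returns growth `(1 - r)^(-β)` for `h - g`, hence for `Im f`.
-/

open Complex Metric Set

theorem norm_deriv_le_of_forall_mem_ball_abs_re_le {f : ℂ → ℂ} {c : ℂ} {R A : ℝ}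
    (hR : 0 < R) (hA : 0 < A) (hf : DifferentiableOn ℂ f (ball c R))
    (hre : ∀ z ∈ ball c R, |(f z).re| ≤ A) :
    ‖deriv f c‖ ≤ 8 * A / R := by
  set F : ℂ → ℂ := fun z ↦ f (c + z) - f c
  have hball : ∀ {z : ℂ}, z ∈ ball (0 : ℂ) R → c + z ∈ ball c R := fun hz ↦ by
    simpa [mem_ball, dist_eq_norm] using hz
  have hF : DifferentiableOn ℂ F (ball 0 R) :=
    (hf.comp (by fun_prop) fun _ hz ↦ hball hz).sub_const _
  have hFre : MapsTo F (ball 0 R) {w | w.re ≤ 2 * A} := fun z hz ↦ by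
    have h1 := abs_le.mp (hre _ (hball hz))
    have h2 := abs_le.mp (hre c (mem_ball_self hR))
    simp only [F, mem_ofPred_eq, sub_re]
    linarith [h1.2, h2.1]
  -- Borel–Carathéodory on `ball 0 R`, then Cauchy's estimate on the circle of radius `R / 2`.
  have hsphere : ∀ z ∈ sphere (0 : ℂ) (R / 2), ‖F z‖ ≤ 4 * A := fun z hz ↦ by
    have hzR : z ∈ ball (0 : ℂ) R := sphere_subset_ball (by linarith) hz
    have hnorm : ‖z‖ = R / 2 := by simpa using hz
    calc ‖F z‖ ≤ 2 * (2 * A) * ‖z‖ / (R - ‖z‖) :=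
          borelCaratheodory_zero (by positivity) hF hFre hR hzR (by simp [F])
      _ = 4 * A := by rw [hnorm]; field_simp; ring
  have hFcl : DiffContOnCl ℂ F (ball 0 (R / 2)) :=
    (hF.mono (closedBall_subset_ball (by linarith))).diffContOnCl_ball le_rfl
  have hderiv : deriv F 0 = deriv f c := by
    simp [F, deriv_comp_const_add]
  calc ‖deriv f c‖ = ‖deriv F 0‖ := by rw [hderiv]
    _ ≤ 4 * A / (R / 2) := norm_deriv_le_of_forall_mem_sphere_norm_le (by positivity) hFcl hsphere
    _ = 8 * A / R := by field_simp; ring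

theorem norm_deriv_le_of_abs_re_le_one_sub_norm_rpow {F : ℂ → ℂ} {β C : ℝ} (hβ : 0 ≤ β)
    (hC : 0 < C) (hF : DifferentiableOn ℂ F (ball 0 1))
    (hre : ∀ z ∈ ball (0 : ℂ) 1, |(F z).re| ≤ C * (1 - ‖z‖) ^ (-β))
    {w : ℂ} (hw : w ∈ ball (0 : ℂ) 1) :
    ‖deriv F w‖ ≤ 2 ^ (β + 4) * C * (1 - ‖w‖) ^ (-β - 1) := by
  have hw1 : ‖w‖ < 1 := mem_ball_zero_iff.mp hw
  set ρ := (1 - ‖w‖) / 2 with hρ_def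
  have hρ : 0 < ρ := by linarith
  have hdist : ∀ z ∈ ball w ρ, ρ ≤ 1 - ‖z‖ := fun z hz ↦ by
    have := norm_le_norm_add_norm_sub' z w
    rw [mem_ball, dist_eq_norm] at hz
    linarith
  have hsub : ball w ρ ⊆ ball (0 : ℂ) 1 := fun z hz ↦
    mem_ball_zero_iff.mpr (by linarith [hdist z hz])
  have hbound : ∀ z ∈ ball w ρ, |(F z).re| ≤ C * ρ ^ (-β) := fun z hz ↦
    (hre z (hsub hz)).trans <| by
      gcongr ?_ * ?_
      exact Real.rpow_le_rpow_of_nonpos hρ (hdist z hz) (by linarith)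
  calc ‖deriv F w‖ ≤ 8 * (C * ρ ^ (-β)) / ρ :=
        norm_deriv_le_of_forall_mem_ball_abs_re_le hρ (by positivity) (hF.mono hsub) hbound
    _ = 2 ^ (β + 4) * C * (1 - ‖w‖) ^ (-β - 1) := by
      have h1w : 0 < 1 - ‖w‖ := by linarith
      rw [hρ_def, Real.div_rpow h1w.le zero_le_two, Real.rpow_sub h1w, Real.rpow_one,
        Real.rpow_add zero_lt_two, Real.rpow_neg zero_le_two]
      field_simp
      norm_num

theorem norm_sub_le_div_mul_norm_add {E : Type*} [SeminormedAddCommGroup E] {a b : E} {k : ℝ}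
    (hk0 : 0 ≤ k) (hk1 : k < 1) (hab : ‖b‖ ≤ k * ‖a‖) :
    ‖a - b‖ ≤ (1 + k) / (1 - k) * ‖a + b‖ := by
  have hsub : ‖a - b‖ ≤ (1 + k) * ‖a‖ := by linarith [norm_sub_le a b]
  have hadd : (1 - k) * ‖a‖ ≤ ‖a + b‖ := by
    have := norm_sub_le (a + b) b
    rw [add_sub_cancel_right] at this
    linarith
  rw [div_mul_eq_mul_div, le_div_iff₀ (by linarith)]
  nlinarith

theorem norm_sub_apply_zero_le_of_norm_deriv_le {E : Type*} [NormedAddCommGroup E]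
    [NormedSpace ℂ E] {G : ℂ → E} {β M : ℝ} (hβ : β ≠ 0) (hG : DifferentiableOn ℂ G (ball 0 1))
    (hG' : ∀ w ∈ ball (0 : ℂ) 1, ‖deriv G w‖ ≤ M * (1 - ‖w‖) ^ (-β - 1))
    {z : ℂ} (hz : z ∈ ball (0 : ℂ) 1) :
    ‖G z - G 0‖ ≤ M / β * ((1 - ‖z‖) ^ (-β) - 1) := by
  set r := ‖z‖
  have hr1 : r < 1 := mem_ball_zero_iff.mp hz
  have hseg : ∀ t ∈ Icc (0 : ℝ) 1, t • z ∈ ball (0 : ℂ) 1 := fun t ht ↦ by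
    rw [mem_ball_zero_iff, norm_smul, Real.norm_of_nonneg ht.1]
    nlinarith [norm_nonneg z, ht.2]
  have hpos : ∀ t ∈ Icc (0 : ℝ) 1, 0 < 1 - t * r := fun t ht ↦ by
    nlinarith [norm_nonneg z, ht.1, ht.2]
  -- Fence `t ↦ G (t • z) - G 0` by a primitive of the majorant of its derivative.
  have hGt : ∀ t ∈ Icc (0 : ℝ) 1,
      HasDerivAt (fun s : ℝ ↦ G (s • z) - G 0) (z • deriv G (t • z)) t := fun t ht ↦ by
    have hGd := (hG.differentiableAt (isOpen_ball.mem_nhds (hseg t ht))).hasDerivAt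
    simpa using (hGd.scomp t ((hasDerivAt_id t).smul_const z)).sub_const (G 0)
  have hB : ∀ t ∈ Icc (0 : ℝ) 1, HasDerivAt (fun s : ℝ ↦ M / β * ((1 - s * r) ^ (-β) - 1))
      (M * (r * (1 - t * r) ^ (-β - 1))) t := fun t ht ↦ by
    have hin : HasDerivAt (fun s : ℝ ↦ 1 - s * r) (-r) t := by
      simpa using ((hasDerivAt_id t).mul_const r).const_sub 1
    have hpow := (Real.hasDerivAt_rpow_const (p := -β) (Or.inl (hpos t ht).ne')).comp t hin
    refine ((hpow.sub_const 1).const_mul (M / β)).congr_deriv ?_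
    field_simp
  have hfence := image_norm_le_of_norm_deriv_right_le_deriv_boundary'
    (f := fun s : ℝ ↦ G (s • z) - G 0) (a := 0) (b := 1)
    (fun t ht ↦ (hGt t ht).continuousAt.continuousWithinAt)
    (fun t ht ↦ (hGt t (Ico_subset_Icc_self ht)).hasDerivWithinAt)
    (by simp) (fun t ht ↦ (hB t ht).continuousAt.continuousWithinAt)
    (fun t ht ↦ (hB t (Ico_subset_Icc_self ht)).hasDerivWithinAt)
    (fun t ht ↦ by
      have ht' := Ico_subset_Icc_self ht
      have := hG' _ (hseg t ht')
      rw [norm_smul, Real.norm_of_nonneg ht'.1] at this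
      rw [norm_smul, ← mul_left_comm]
      gcongr)
    (right_mem_Icc.mpr zero_le_one)
  simpa using hfence

theorem stmt1 (β : ℝ) (hβ : 0 < β)
    (h g : ℂ → ℂ) (k : ℝ) (hk0 : 0 ≤ k) (hk1 : k < 1)
    (hh : DifferentiableOn ℂ h (ball (0:ℂ) 1))
    (hg : DifferentiableOn ℂ g (ball (0:ℂ) 1))
    (hqr : ∀ z ∈ ball (0:ℂ) 1, ‖deriv g z‖ ≤ k * ‖deriv h z‖)
    (C : ℝ) (hC : 0 < C)
    (hu : ∀ r ∈ Ico (0:ℝ) 1, ∀ z : ℂ, ‖z‖ = r →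
      |(h z + (starRingEnd ℂ) (g z)).re| ≤ C * (1 - r) ^ (-β)) :
    ∃ C' > 0, ∀ r ∈ Ico (0:ℝ) 1, ∀ z : ℂ, ‖z‖ = r →
      |(h z + (starRingEnd ℂ) (g z)).im| ≤ C' * (1 - r) ^ (-β) := by
  have hre : ∀ z ∈ ball (0 : ℂ) 1, |(h z + g z).re| ≤ C * (1 - ‖z‖) ^ (-β) := fun z hz ↦ by
    simpa using hu ‖z‖ ⟨norm_nonneg z, mem_ball_zero_iff.mp hz⟩ z rfl
  set M := (1 + k) / (1 - k) * (2 ^ (β + 4) * C)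
  have hM : 0 ≤ M := mul_nonneg (div_nonneg (by linarith) (by linarith)) (by positivity)
  have hderiv : ∀ w ∈ ball (0 : ℂ) 1,
      ‖deriv (h - g) w‖ ≤ M * (1 - ‖w‖) ^ (-β - 1) := fun w hw ↦ by
    have hhw := hh.differentiableAt (isOpen_ball.mem_nhds hw)
    have hgw := hg.differentiableAt (isOpen_ball.mem_nhds hw)
    have hF := norm_deriv_le_of_abs_re_le_one_sub_norm_rpow hβ.le hC (hh.add hg) hre hw
    rw [deriv_add hhw hgw] at hF
    rw [deriv_sub hhw hgw, mul_assoc]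
    exact (norm_sub_le_div_mul_norm_add hk0 hk1 (hqr w hw)).trans (by gcongr)
  refine ⟨‖h 0 - g 0‖ + M / β + 1, by positivity, fun r hr z hz ↦ ?_⟩
  have hz1 : z ∈ ball (0 : ℂ) 1 := mem_ball_zero_iff.mpr (hz ▸ hr.2)
  have hgrowth := norm_sub_apply_zero_le_of_norm_deriv_le hβ.ne' (hh.sub hg) hderiv hz1
  rw [Pi.sub_apply, Pi.sub_apply, hz] at hgrowth
  have hone : 1 ≤ (1 - r) ^ (-β) :=
    Real.one_le_rpow_of_pos_of_le_one_of_nonpos (by linarith [hr.2]) (by linarith [hr.1])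
      (by linarith)
  have him : (h z + (starRingEnd ℂ) (g z)).im = (h z - g z).im := by
    simp only [add_im, sub_im, conj_im]
    ring
  rw [him]
  calc |(h z - g z).im| ≤ ‖h z - g z‖ := abs_im_le_norm _
    _ ≤ ‖h 0 - g 0‖ + ‖(h z - g z) - (h 0 - g 0)‖ := norm_le_norm_add_norm_sub' _ _
    _ ≤ (‖h 0 - g 0‖ + M / β + 1) * (1 - r) ^ (-β) := by
      nlinarith [norm_nonneg (h 0 - g 0), div_nonneg hM hβ.le]
end

section
/- Let 0 < α < 1 and let φ : ℝ → ℝ satisfy |φ(s) - φ(t)| ≤ A·|s-t|^α for all s,t ∈ ℝ and some constant A > 0, and suppose φ is 2π-periodic. Then there is a constant C > 0 such that for all r ∈ [0,1) and all θ ∈ ℝ: |(1/π)·∫₀^{2π} e^{it}/(e^{it} - r·e^{iθ})² · φ(t) dt| ≤ C·(1-r)^{α-1}. -/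
open Complex Set

/-!
The integral is `F'(z)` at `z = r e^{iθ}`, where `F` is holomorphic on the disc with real part the
Poisson extension of `φ`. The kernel `e^{it} / (e^{it} - z)²` is the `t`-derivative of
`i / (e^{it} - z)`, so it integrates to zero over a period and `φ t` may be replaced by
`φ t - φ θ = O(|t - θ|^α)`. For `|t - θ| ≤ π` the denominator satisfies
`|e^{it} - z|² ≳ (1 - r)² + (t - θ)²`, and the substitution `t - θ = (1 - r) v` turns
`∫ |u|^α / ((1 - r)² + u²) du` into `(1 - r)^(α - 1) ∫ |v|^α / (1 + v²) dv`, which is finite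
because `α < 1`.
-/

open MeasureTheory intervalIntegral Topology
open scoped Real

lemma continuous_of_dist_le_mul_rpow {X Y : Type*} [PseudoMetricSpace X] [PseudoMetricSpace Y]
    {f : X → Y} {A α : ℝ} (hα : 0 < α) (hf : ∀ x y, dist (f x) (f y) ≤ A * dist x y ^ α) :
    Continuous f := by
  refine continuous_iff_continuousAt.2 fun x => tendsto_iff_dist_tendsto_zero.2 ?_
  have hlim : Filter.Tendsto (fun y => A * dist y x ^ α) (𝓝 x) (𝓝 0) := by
    have : Continuous fun y => A * dist y x ^ α := by fun_prop (disch := exact hα.le)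
    simpa [Real.zero_rpow hα.ne'] using this.tendsto x
  exact squeeze_zero (fun _ => dist_nonneg) (fun y => hf y x) hlim

lemma norm_intervalIntegral_le_integral {E : Type*} [NormedAddCommGroup E] [NormedSpace ℝ E]
    {f : ℝ → E} {g : ℝ → ℝ} {a b : ℝ} (hab : a ≤ b) (hg : Integrable g) (hg0 : 0 ≤ g)
    (hfg : ∀ t ∈ Ioc a b, ‖f t‖ ≤ g t) : ‖∫ t in a..b, f t‖ ≤ ∫ t, g t := by
  refine (norm_integral_le_of_norm_le hab (ae_of_all _ hfg) hg.intervalIntegrable).trans ?_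
  rw [intervalIntegral.integral_of_le hab]
  exact setIntegral_le_integral hg (ae_of_all _ hg0)

section Kernel

variable {z : ℂ}

lemma exp_mul_I_sub_ne_zero (hz : ‖z‖ < 1) (t : ℝ) : exp (t * I) - z ≠ 0 := by
  intro h
  have := congrArg norm (sub_eq_zero.1 h)
  rw [norm_exp_ofReal_mul_I] at this
  linarith

lemma continuous_exp_mul_I_div_sub_sq (hz : ‖z‖ < 1) :
    Continuous fun t : ℝ => exp (t * I) / (exp (t * I) - z) ^ 2 := by
  fun_prop (disch := exact fun t => pow_ne_zero 2 (exp_mul_I_sub_ne_zero hz t))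

lemma hasDerivAt_I_div_exp_mul_I_sub (hz : ‖z‖ < 1) (t : ℝ) :
    HasDerivAt (fun t : ℝ => I / (exp (t * I) - z)) (exp (t * I) / (exp (t * I) - z) ^ 2) t := by
  have hexp : HasDerivAt (fun t : ℝ => exp (t * I) - z) (exp (t * I) * I) t := by
    simpa using (((hasDerivAt_id (t : ℂ)).mul_const I).cexp.comp_ofReal).sub_const z
  simp_rw [div_eq_mul_inv I]
  exact ((hexp.inv (exp_mul_I_sub_ne_zero hz t)).const_mul I).congr_deriv
    (by linear_combination -exp (t * I) / (exp (t * I) - z) ^ 2 * I_sq)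

lemma integral_exp_mul_I_div_sub_sq (hz : ‖z‖ < 1) :
    ∫ t in (0 : ℝ)..2 * π, exp (t * I) / (exp (t * I) - z) ^ 2 = 0 := by
  rw [integral_eq_sub_of_hasDerivAt (fun t _ => hasDerivAt_I_div_exp_mul_I_sub hz t)
    ((continuous_exp_mul_I_div_sub_sq hz).intervalIntegrable _ _)]
  simp

lemma integral_exp_mul_I_div_sub_sq_mul_sub_const (hz : ‖z‖ < 1) {f : ℝ → ℂ}
    (hf : Continuous f) (c : ℂ) :
    ∫ t in (0 : ℝ)..2 * π, exp (t * I) / (exp (t * I) - z) ^ 2 * (f t - c) =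
      ∫ t in (0 : ℝ)..2 * π, exp (t * I) / (exp (t * I) - z) ^ 2 * f t := by
  have hK := continuous_exp_mul_I_div_sub_sq hz
  simp_rw [mul_sub]
  rw [integral_sub (f := fun t => exp (t * I) / (exp (t * I) - z) ^ 2 * f t)
      ((hK.mul hf).intervalIntegrable _ _) ((hK.mul_const c).intervalIntegrable _ _),
    intervalIntegral.integral_mul_const, integral_exp_mul_I_div_sub_sq hz, zero_mul, sub_zero]

lemma periodic_exp_mul_I_div_sub_sq_mul {f : ℝ → ℂ} (hf : Function.Periodic f (2 * π)) :
    Function.Periodic (fun t : ℝ => exp (t * I) / (exp (t * I) - z) ^ 2 * f t) (2 * π) := by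
  intro t
  have hexp : exp ((t + 2 * π : ℝ) * I) = exp (t * I) := by
    push_cast
    exact exp_mul_I_periodic t
  simp only [hexp, hf t]

end Kernel

lemma sq_add_sq_div_le_norm_exp_mul_I_sub_sq {r u : ℝ} (hr : 0 ≤ r) (hu : |u| ≤ π) :
    ((1 - r) ^ 2 + u ^ 2) / (2 * π ^ 2) ≤ ‖exp (u * I) - r‖ ^ 2 := by
  have hnorm : ‖exp (u * I) - r‖ ^ 2 = 1 - 2 * r * Real.cos u + r ^ 2 := by
    rw [← normSq_eq_norm_sq, normSq_apply]
    simp only [sub_re, exp_ofReal_mul_I_re, ofReal_re, sub_im, exp_ofReal_mul_I_im, ofReal_im,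
      sub_zero]
    nlinarith [Real.sin_sq_add_cos_sq u]
  set k := 2 / π ^ 2 * u ^ 2 with hk
  have hcos : Real.cos u ≤ 1 - k := Real.cos_le_one_sub_mul_cos_sq hu
  have hk0 : 0 ≤ k := by positivity
  have hk2 : k ≤ 2 := by
    have : u ^ 2 ≤ π ^ 2 := by simpa using pow_le_pow_left₀ (abs_nonneg u) hu 2
    rw [hk, div_mul_eq_mul_div, div_le_iff₀ (by positivity)]
    linarith
  calc ((1 - r) ^ 2 + u ^ 2) / (2 * π ^ 2) ≤ ((1 - r) ^ 2 + k) / 4 := by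
        have : 2 ≤ π ^ 2 := by nlinarith [Real.pi_gt_three]
        rw [hk, div_le_div_iff₀ (by positivity) (by norm_num)]
        field_simp
        nlinarith [sq_nonneg (1 - r)]
    _ ≤ (1 - r) ^ 2 + 2 * r * k := by
        rcases le_total r (1 / 8) with h | h <;> nlinarith
    _ ≤ 1 - 2 * r * Real.cos u + r ^ 2 := by nlinarith
    _ = ‖exp (u * I) - r‖ ^ 2 := hnorm.symm

lemma norm_exp_mul_I_sub_mul_exp_mul_I (r t θ : ℝ) :
    ‖exp (t * I) - r * exp (θ * I)‖ = ‖exp ((t - θ : ℝ) * I) - r‖ := by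
  have : exp (t * I) - r * exp (θ * I) = exp (θ * I) * (exp ((t - θ : ℝ) * I) - r) := by
    rw [mul_sub, ← exp_add]
    push_cast
    ring_nf
  rw [this, norm_mul, norm_exp_ofReal_mul_I, one_mul]

lemma norm_exp_mul_I_div_sub_sq_le {r θ t : ℝ} (hr0 : 0 ≤ r) (hr1 : r < 1) (ht : |t - θ| ≤ π) :
    ‖exp (t * I) / (exp (t * I) - r * exp (θ * I)) ^ 2‖ ≤
      2 * π ^ 2 / ((1 - r) ^ 2 + (t - θ) ^ 2) := by
  have hpos : 0 < ((1 - r) ^ 2 + (t - θ) ^ 2) / (2 * π ^ 2) := by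
    have : 0 < 1 - r := by linarith
    positivity
  have hle := sq_add_sq_div_le_norm_exp_mul_I_sub_sq hr0 ht
  rw [norm_div, norm_pow, norm_exp_ofReal_mul_I, norm_exp_mul_I_sub_mul_exp_mul_I]
  exact (one_div_le_one_div_of_le hpos hle).trans_eq (one_div_div _ _)

section WeightIntegral

variable {α : ℝ}

lemma integrable_rpow_abs_div_one_add_sq (hα0 : 0 ≤ α) (hα1 : α < 1) :
    Integrable fun v : ℝ => |v| ^ α / (1 + v ^ 2) := by
  have hr : (Module.finrank ℝ ℝ : ℝ) < 2 - α := by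
    rw [Module.finrank_self, Nat.cast_one]
    linarith
  refine (integrable_rpow_neg_one_add_norm_sq hr).mono'
    (by fun_prop : Measurable _).aestronglyMeasurable (ae_of_all _ fun v => ?_)
  have hpos : (0 : ℝ) < 1 + v ^ 2 := by positivity
  have habs : |v| ^ α ≤ (1 + v ^ 2) ^ (α / 2) := by
    calc |v| ^ α = (|v| ^ 2) ^ (α / 2) := by
          rw [← Real.rpow_natCast_mul (abs_nonneg v)]; ring_nf
      _ ≤ (1 + v ^ 2) ^ (α / 2) := by
          gcongr
          simp
  calc ‖|v| ^ α / (1 + v ^ 2)‖ = |v| ^ α / (1 + v ^ 2) := by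
        rw [Real.norm_of_nonneg (by positivity)]
    _ ≤ (1 + v ^ 2) ^ (α / 2) / (1 + v ^ 2) := by gcongr
    _ = (1 + ‖v‖ ^ 2) ^ (-(2 - α) / 2) := by
        rw [Real.norm_eq_abs, sq_abs, ← Real.rpow_sub_one hpos.ne']
        ring_nf

lemma integral_rpow_abs_div_one_add_sq_pos (hα0 : 0 ≤ α) (hα1 : α < 1) :
    0 < ∫ v : ℝ, |v| ^ α / (1 + v ^ 2) := by
  rw [integral_pos_iff_support_of_nonneg (fun v => by positivity)
    (integrable_rpow_abs_div_one_add_sq hα0 hα1)]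
  refine (measure_mono (s := Ioi 0) fun v (hv : 0 < v) => ?_).trans_lt' (by simp)
  simp only [Function.mem_support]
  positivity

lemma rpow_abs_div_sq_add_sq_eq {δ : ℝ} (hδ : 0 < δ) (u : ℝ) :
    |u| ^ α / (δ ^ 2 + u ^ 2) = δ ^ (α - 2) * (|u / δ| ^ α / (1 + (u / δ) ^ 2)) := by
  rw [abs_div, abs_of_pos hδ, Real.div_rpow (abs_nonneg u) hδ.le, Real.rpow_sub hδ,
    Real.rpow_two]
  field_simp

lemma integral_rpow_abs_div_sq_add_sq {δ : ℝ} (hδ : 0 < δ) :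
    ∫ u : ℝ, |u| ^ α / (δ ^ 2 + u ^ 2) = δ ^ (α - 1) * ∫ v : ℝ, |v| ^ α / (1 + v ^ 2) := by
  simp_rw [rpow_abs_div_sq_add_sq_eq hδ]
  rw [MeasureTheory.integral_const_mul, Measure.integral_comp_div (fun v => |v| ^ α / (1 + v ^ 2)),
    abs_of_pos hδ, smul_eq_mul, ← mul_assoc, ← Real.rpow_add_one hδ.ne']
  ring_nf

lemma integrable_rpow_abs_div_sq_add_sq {δ : ℝ} (hα0 : 0 ≤ α) (hα1 : α < 1) (hδ : 0 < δ) :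
    Integrable fun u : ℝ => |u| ^ α / (δ ^ 2 + u ^ 2) := by
  simp_rw [rpow_abs_div_sq_add_sq_eq hδ]
  exact ((integrable_rpow_abs_div_one_add_sq hα0 hα1).comp_div hδ.ne').const_mul _

end WeightIntegral

section HolderBound

variable {φ : ℝ → ℝ} {A α r θ : ℝ}

lemma norm_exp_mul_I_div_sub_sq_mul_sub_le (hφ : ∀ t, |φ t - φ θ| ≤ A * |t - θ| ^ α)
    (hr0 : 0 ≤ r) (hr1 : r < 1) {t : ℝ} (ht : |t - θ| ≤ π) :
    ‖exp (t * I) / (exp (t * I) - r * exp (θ * I)) ^ 2 * ((φ t : ℂ) - φ θ)‖ ≤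
      2 * π ^ 2 * A * (|t - θ| ^ α / ((1 - r) ^ 2 + (t - θ) ^ 2)) := by
  have hdiff : ‖(φ t : ℂ) - φ θ‖ ≤ A * |t - θ| ^ α := by
    rw [← ofReal_sub, norm_real, Real.norm_eq_abs]
    exact hφ t
  calc _ ≤ 2 * π ^ 2 / ((1 - r) ^ 2 + (t - θ) ^ 2) * (A * |t - θ| ^ α) :=
        norm_mul_le_of_le (norm_exp_mul_I_div_sub_sq_le hr0 hr1 ht) hdiff
    _ = _ := by ring

lemma norm_integral_exp_mul_I_div_sub_sq_mul_sub_le (hα0 : 0 ≤ α) (hα1 : α < 1) (hA : 0 ≤ A)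
    (hφ : ∀ t, |φ t - φ θ| ≤ A * |t - θ| ^ α) (hr0 : 0 ≤ r) (hr1 : r < 1) :
    ‖∫ t in θ - π..θ - π + 2 * π,
        exp (t * I) / (exp (t * I) - r * exp (θ * I)) ^ 2 * ((φ t : ℂ) - φ θ)‖ ≤
      2 * π ^ 2 * A * (∫ v : ℝ, |v| ^ α / (1 + v ^ 2)) * (1 - r) ^ (α - 1) := by
  have hδ : 0 < 1 - r := by linarith
  set g : ℝ → ℝ := fun u => 2 * π ^ 2 * A * (|u| ^ α / ((1 - r) ^ 2 + u ^ 2))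
  have hg : Integrable g := (integrable_rpow_abs_div_sq_add_sq hα0 hα1 hδ).const_mul _
  calc _ ≤ ∫ t, g (t - θ) := by
        refine norm_intervalIntegral_le_integral (by linarith [Real.pi_pos])
          (hg.comp_sub_right θ) (fun u => by positivity) fun t ht => ?_
        exact norm_exp_mul_I_div_sub_sq_mul_sub_le hφ hr0 hr1
          (abs_le.2 ⟨by linarith [ht.1], by linarith [ht.2]⟩)
    _ = _ := by
        rw [integral_sub_right_eq_self g θ, MeasureTheory.integral_const_mul,
          integral_rpow_abs_div_sq_add_sq hδ]
        ring

end HolderBound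

theorem stmt9 (α : ℝ) (hα0 : 0 < α) (hα1 : α < 1)
    (φ : ℝ → ℝ) (A : ℝ) (hA : 0 < A)
    (hHolder : ∀ s t : ℝ, |φ s - φ t| ≤ A * |s - t| ^ α)
    (hper : ∀ t : ℝ, φ (t + 2 * Real.pi) = φ t) :
    ∃ C > 0, ∀ r ∈ Ico (0:ℝ) 1, ∀ θ : ℝ,
      ‖(1 / (Real.pi : ℂ)) *
        ∫ t in (0:ℝ)..(2 * Real.pi),
          Complex.exp (t * Complex.I) /
            (Complex.exp (t * Complex.I) - r * Complex.exp (θ * Complex.I)) ^ 2 * (φ t : ℂ)‖ ≤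
        C * (1 - r) ^ (α - 1) := by
  set c := ∫ v : ℝ, |v| ^ α / (1 + v ^ 2)
  have hc : 0 < c := integral_rpow_abs_div_one_add_sq_pos hα0.le hα1
  refine ⟨2 * π * A * c, by positivity, ?_⟩
  rintro r ⟨hr0, hr1⟩ θ
  have hz : ‖(r : ℂ) * exp (θ * I)‖ < 1 := by simpa [abs_of_nonneg hr0] using hr1
  have hφ : Continuous φ :=
    continuous_of_dist_le_mul_rpow hα0 (by simpa only [Real.dist_eq] using hHolder)
  have hper' : Function.Periodic (fun t => (φ t : ℂ) - φ θ) (2 * π) := fun t => by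
    simp only [hper]
  calc _ = 1 / π * ‖∫ t in θ - π..θ - π + 2 * π,
          exp (t * I) / (exp (t * I) - r * exp (θ * I)) ^ 2 * ((φ t : ℂ) - φ θ)‖ := by
        rw [← integral_exp_mul_I_div_sub_sq_mul_sub_const hz (f := fun t => (φ t : ℂ))
            (by fun_prop) (φ θ),
          ← (periodic_exp_mul_I_div_sub_sq_mul hper').intervalIntegral_add_eq 0 (θ - π),
          zero_add, norm_mul, norm_div, norm_one, norm_real, Real.norm_of_nonneg Real.pi_pos.le]
    _ ≤ 1 / π * (2 * π ^ 2 * A * c * (1 - r) ^ (α - 1)) := by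
        gcongr
        exact norm_integral_exp_mul_I_div_sub_sq_mul_sub_le hα0.le hα1 hA.le
          (fun t => hHolder t θ) hr0 hr1
    _ = 2 * π * A * c * (1 - r) ^ (α - 1) := by
        field_simp
end

section
/- Let 0 < α < 1 and let f = h + conj(g) be a harmonic K-quasiregular mapping on the unit disk 𝔻 (so h, g are holomorphic on 𝔻 and |g'(z)| ≤ k·|h'(z)| on 𝔻 for some k ∈ [0,1)), with u = Re f. Suppose u extends continuously to the closed unit disk and its boundary values satisfy |u(e^{is}) - u(e^{it})| ≤ A·|s-t|^α for all s,t ∈ ℝ and some A > 0. Then there is a constant C > 0 such that |h'(z)| ≤ C·(1-|z|)^{α-1} and |g'(z)| ≤ C·(1-|z|)^{α-1} for all z ∈ 𝔻. -/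
/-!
Put `F = h + g`, holomorphic on the disc with `Re F = U`. Subtracting from `F` the Herglotz–Riesz
integral of the boundary values of `U` leaves a holomorphic function with vanishing real part, so
for every real constant `c`
  `F'(z) = ⨍_{|ζ| = 1} 2ζ / (ζ - z)² · (U(ζ) - c)`.
Take `c = U(z / |z|)` and write `ζ = e^{i(arg z + s)}`. Then `|U(ζ) - c| ≤ A |s|^α`, while
`|ζ - z| ≥ max (1 - |z|) (|s| / π)` (radial distance, and half the chord from `z / |z|` to `ζ`), so
`|F'(z)| ≲ ∫_{-π}^{π} |s|^α / max (1 - |z|) (|s| / π)² ds ≲ (1 - |z|)^(α - 1)`.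
Finally `|g'| ≤ k |h'|` gives `(1 - k) |h'| ≤ |h' + g'| = |F'|`.
-/

open Complex Metric Set Real Topology Filter InnerProductSpace

theorem HasDerivAt.eq_zero_of_re_eventuallyEq_zero {H : ℂ → ℂ} {d z : ℂ} (hH : HasDerivAt H d z)
    (hre : (fun w ↦ (H w).re) =ᶠ[𝓝 z] 0) : d = 0 := by
  have hL := (reCLM.hasFDerivAt.comp z (hH.hasFDerivAt.restrictScalars ℝ)).unique
    ((hasFDerivAt_const (0 : ℝ) z).congr_of_eventuallyEq hre)
  have h₁ := congrArg (· 1) hL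
  have hI := congrArg (· I) hL
  simp only [ContinuousLinearMap.comp_apply, ContinuousLinearMap.coe_restrictScalars',
    ContinuousLinearMap.toSpanSingleton_apply, smul_eq_mul, one_mul, reCLM_apply, zero_apply,
    mul_re, I_re, zero_mul, I_im, zero_sub, neg_eq_zero] at h₁ hI
  exact Complex.ext h₁ hI

theorem harmonicContOnCl_of_re_eq {F : ℂ → ℂ} {U : ℂ → ℝ} {R : ℝ}
    (hF : DifferentiableOn ℂ F (ball 0 R)) (hU : ContinuousOn U (closedBall 0 R))
    (hFU : ∀ w ∈ ball 0 R, (F w).re = U w) : HarmonicContOnCl U (ball 0 R) := by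
  refine ⟨fun w hw ↦ ?_, hU.mono closure_ball_subset_closedBall⟩
  have hUF : (fun ζ ↦ (F ζ).re) =ᶠ[𝓝 w] U :=
    eventually_of_mem (isOpen_ball.mem_nhds hw) hFU
  exact (harmonicAt_congr_nhds hUF).1
    ((hF.analyticAt (isOpen_ball.mem_nhds hw)).harmonicAt_re)

theorem deriv_eq_circleAverage_of_re_eq {F : ℂ → ℂ} {U : ℂ → ℝ} {R : ℝ}
    (hF : DifferentiableOn ℂ F (ball 0 R)) (hU : ContinuousOn U (closedBall 0 R))
    (hFU : ∀ w ∈ ball 0 R, (F w).re = U w) {z : ℂ} (hz : z ∈ ball 0 R) :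
    deriv F z = circleAverage (fun ζ ↦ (2 * ζ / (ζ - z) ^ 2) • (U ζ : ℂ)) 0 R := by
  have hR : 0 ≤ R := (pos_of_mem_ball hz).le
  have hUs : ContinuousOn U (sphere 0 |R|) :=
    hU.mono (by rw [abs_of_nonneg hR]; exact sphere_subset_closedBall)
  have hUint : CircleIntegrable U 0 R := hUs.circleIntegrable'
  set P : ℂ → ℂ := fun w ↦ circleAverage (fun ζ ↦ herglotzRieszKernel 0 w ζ • (U ζ : ℂ)) 0 R
  have hP : ∀ w ∈ ball 0 R, (P w).re = U w := fun w hw ↦ by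
    rw [re_circleAverage_herglotzRieszKernel_smul hUint hw,
      (harmonicContOnCl_of_re_eq hF hU hFU).circleAverage_re_herglotzRieszKernel_smul hw]
  have hzR := isOpen_ball.mem_nhds hz
  have hPderiv : HasDerivAt P (circleAverage (fun ζ ↦ (2 * ζ / (ζ - z) ^ 2) • (U ζ : ℂ)) 0 R) z :=
    hasDerivAt_circleAverage_herglotzRieszKernel_smul
      (continuous_ofReal.comp_continuousOn hUs).circleIntegrable' hz
  refine sub_eq_zero.1 <| HasDerivAt.eq_zero_of_re_eventuallyEq_zero
    ((hF.differentiableAt hzR).hasDerivAt.sub hPderiv) ?_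
  filter_upwards [hzR] with w hw
  simp only [Pi.zero_apply, Pi.sub_apply, sub_re, hFU w hw, ← hP w hw, P, sub_self]

theorem two_mul_abs_div_pi_le_norm_exp_sub_one {s : ℝ} (hs : |s| ≤ π) :
    2 * |s| / π ≤ ‖exp (s * I) - 1‖ := by
  have h := mul_le_sin (abs_nonneg (s / 2)) (by rw [abs_div, abs_two]; linarith)
  rw [← abs_sin_eq_sin_abs_of_abs_le_pi (by rw [abs_div, abs_two]; linarith [pi_pos]), abs_div,
    abs_two] at h
  rw [mul_comm _ I, norm_exp_I_mul_ofReal_sub_one, norm_mul, Real.norm_eq_abs, Real.norm_eq_abs,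
    abs_two]
  calc 2 * |s| / π = 2 * (2 / π * (|s| / 2)) := by ring
    _ ≤ _ := by gcongr

theorem abs_div_pi_le_norm_exp_arg_add_sub {z : ℂ} (hz : ‖z‖ ≤ 1) {s : ℝ} (hs : |s| ≤ π) :
    |s| / π ≤ ‖exp ((arg z + s : ℝ) * I) - z‖ := by
  set u := exp (arg z * I)
  have hu : ‖u‖ = 1 := norm_exp_ofReal_mul_I _
  have hζ : exp ((arg z + s : ℝ) * I) = u * exp (s * I) := by
    rw [← Complex.exp_add]; push_cast; ring_nf
  have hchord : ‖exp ((arg z + s : ℝ) * I) - u‖ = ‖exp (s * I) - 1‖ := by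
    rw [hζ, ← mul_sub_one, norm_mul, hu, one_mul]
  have hradial : ‖z - u‖ ≤ ‖exp ((arg z + s : ℝ) * I) - z‖ := by
    have hzu : z - u = -((1 - ‖z‖ : ℝ) * u) := by
      conv_lhs => rw [← norm_mul_exp_arg_mul_I z]
      push_cast; ring
    rw [hzu, norm_neg, norm_mul, hu, mul_one, Complex.norm_real, Real.norm_of_nonneg (by linarith)]
    have := norm_sub_norm_le (exp ((arg z + s : ℝ) * I)) z
    rw [norm_exp_ofReal_mul_I] at this
    linarith
  have := two_mul_abs_div_pi_le_norm_exp_sub_one hs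
  have := norm_sub_le_norm_sub_add_norm_sub (exp ((arg z + s : ℝ) * I)) z u
  rw [hchord] at this
  linarith [show 2 * |s| / π = 2 * (|s| / π) by ring]

theorem integral_abs_rpow_div_max_sq_le {α δ : ℝ} (hα0 : 0 ≤ α) (hα1 : α < 1) (hδ0 : 0 < δ)
    (hδπ : δ ≤ π) :
    ∫ s in (-π)..π, |s| ^ α / max δ (|s| / π) ^ 2 ≤ 2 * (1 + π ^ 2 / (1 - α)) * δ ^ (α - 1) := by
  set f : ℝ → ℝ := fun s ↦ |s| ^ α / max δ (|s| / π) ^ 2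
  have hmax : ∀ s, 0 < max δ (|s| / π) := fun s ↦ lt_max_of_lt_left hδ0
  have hf : Continuous f := by
    refine Continuous.div (by fun_prop (disch := exact fun _ ↦ Or.inr hα0)) (by fun_prop)
      fun s ↦ (pow_pos (hmax s) 2).ne'
  have hint : ∀ a b, IntervalIntegrable f MeasureTheory.volume a b :=
    fun _ _ ↦ hf.intervalIntegrable _ _
  have hsymm : ∫ s in (-π)..0, f s = ∫ s in 0..π, f s := by
    simpa [f] using (intervalIntegral.integral_comp_neg (a := 0) (b := π) f).symm
  have hnear : ∫ s in 0..δ, f s ≤ δ ^ (α - 1) := by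
    calc ∫ s in 0..δ, f s ≤ ∫ _ in 0..δ, δ ^ α / δ ^ 2 := by
          refine intervalIntegral.integral_mono_on hδ0.le (hint _ _) intervalIntegrable_const
            fun s ⟨hs0, hsδ⟩ ↦ ?_
          simp only [f, abs_of_nonneg hs0]
          gcongr
          exact le_max_left _ _
      _ = δ ^ (α - 1) := by
          rw [intervalIntegral.integral_const, smul_eq_mul, sub_zero, rpow_sub_one hδ0.ne']
          field_simp
  have hfar : ∫ s in δ..π, f s ≤ π ^ 2 / (1 - α) * δ ^ (α - 1) := by
    have hpow : ContinuousOn (fun s : ℝ ↦ π ^ 2 * s ^ (α - 2)) (uIcc δ π) := by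
      refine continuousOn_const.mul fun s hs ↦ ?_
      rw [uIcc_of_le hδπ] at hs
      exact (continuousAt_rpow_const _ _ (Or.inl (hδ0.trans_le hs.1).ne')).continuousWithinAt
    have h0 : (0 : ℝ) ∉ uIcc δ π := by rw [uIcc_of_le hδπ]; exact fun h ↦ hδ0.not_ge h.1
    calc ∫ s in δ..π, f s ≤ ∫ s in δ..π, π ^ 2 * s ^ (α - 2) := by
          refine intervalIntegral.integral_mono_on hδπ (hint _ _) hpow.intervalIntegrable
            fun s ⟨hδs, _⟩ ↦ ?_
          have hs0 : 0 < s := hδ0.trans_le hδs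
          calc f s ≤ s ^ α / (s / π) ^ 2 := by
                simp only [f, abs_of_pos hs0]
                gcongr
                exact le_max_right _ _
            _ = π ^ 2 * s ^ (α - 2) := by
                rw [rpow_sub hs0, rpow_two]
                field_simp
      _ = π ^ 2 * ((π ^ (α - 1) - δ ^ (α - 1)) / (α - 1)) := by
          rw [intervalIntegral.integral_const_mul, integral_rpow (Or.inr ⟨by linarith, h0⟩)]
          ring_nf
      _ ≤ π ^ 2 / (1 - α) * δ ^ (α - 1) := by
          rw [← neg_div_neg_eq, neg_sub, neg_sub, mul_div_assoc', div_mul_eq_mul_div]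
          gcongr
          linarith [rpow_nonneg pi_pos.le (α - 1)]
  calc ∫ s in (-π)..π, f s = 2 * ((∫ s in 0..δ, f s) + ∫ s in δ..π, f s) := by
        rw [← intervalIntegral.integral_add_adjacent_intervals (b := 0) (hint _ _) (hint _ _),
          hsymm, ← intervalIntegral.integral_add_adjacent_intervals (b := δ) (hint _ _) (hint _ _)]
        ring
    _ ≤ 2 * (1 + π ^ 2 / (1 - α)) * δ ^ (α - 1) := by linarith

theorem norm_circleAverage_le_integral {E : Type*} [NormedAddCommGroup E] [NormedSpace ℝ E]
    {f : ℂ → E} {c : ℂ} {R : ℝ} (θ : ℝ) {b : ℝ → ℝ}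
    (hb : IntervalIntegrable b MeasureTheory.volume (-π) π)
    (hfb : ∀ s ∈ Icc (-π) π, ‖f (circleMap c R (θ + s))‖ ≤ b s) :
    ‖circleAverage f c R‖ ≤ (2 * π)⁻¹ * ∫ s in (-π)..π, b s := by
  have hshift : circleAverage f c R = (2 * π)⁻¹ • ∫ s in (-π)..π, f (circleMap c R (θ + s)) := by
    rw [circleAverage_eq_integral_add (θ - π)]
    have := intervalIntegral.integral_comp_sub_right (fun s ↦ f (circleMap c R (θ + s)))
      (a := 0) (b := 2 * π) π
    simp only [zero_sub, show 2 * π - π = π by ring] at this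
    rw [← this]
    congr 2 with t
    ring_nf
  rw [hshift, norm_smul, Real.norm_of_nonneg (by positivity)]
  gcongr
  refine intervalIntegral.norm_integral_le_of_norm_le (by linarith [pi_pos])
    (Eventually.of_forall fun s hs ↦ hfb s (Ioc_subset_Icc_self hs)) hb

theorem norm_two_mul_div_sub_sq_le {z : ℂ} (hz : ‖z‖ < 1) {s : ℝ} (hs : |s| ≤ π) :
    ‖2 * exp ((arg z + s : ℝ) * I) / (exp ((arg z + s : ℝ) * I) - z) ^ 2‖
      ≤ 2 / max (1 - ‖z‖) (|s| / π) ^ 2 := by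
  have hdist : max (1 - ‖z‖) (|s| / π) ≤ ‖exp ((arg z + s : ℝ) * I) - z‖ := by
    refine max_le ?_ (abs_div_pi_le_norm_exp_arg_add_sub hz.le hs)
    have := norm_sub_norm_le (exp ((arg z + s : ℝ) * I)) z
    rwa [norm_exp_ofReal_mul_I] at this
  have hpos : 0 < max (1 - ‖z‖) (|s| / π) := lt_max_of_lt_left (by linarith)
  rw [norm_div, norm_mul, norm_pow, norm_exp_ofReal_mul_I, Complex.norm_two, mul_one]
  gcongr

theorem norm_deriv_le_of_re_eq_of_holder {F : ℂ → ℂ} {U : ℂ → ℝ} {α A : ℝ} (hα0 : 0 ≤ α)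
    (hα1 : α < 1) (hA : 0 ≤ A) (hF : DifferentiableOn ℂ F (ball 0 1))
    (hU : ContinuousOn U (closedBall 0 1)) (hFU : ∀ w ∈ ball 0 1, (F w).re = U w)
    (hholder : ∀ s t : ℝ, |U (exp (s * I)) - U (exp (t * I))| ≤ A * |s - t| ^ α)
    {z : ℂ} (hz : z ∈ ball 0 1) :
    ‖deriv F z‖ ≤ 2 * A * (1 + π ^ 2 / (1 - α)) / π * (1 - ‖z‖) ^ (α - 1) := by
  have hz1 : ‖z‖ < 1 := mem_ball_zero_iff.1 hz
  set δ := 1 - ‖z‖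
  have hδ0 : 0 < δ := by simp only [δ]; linarith
  have hδπ : δ ≤ π := by simp only [δ]; linarith [pi_gt_three, norm_nonneg z]
  set c := U (exp (arg z * I))
  set φ : ℂ → ℂ := fun ζ ↦ (2 * ζ / (ζ - z) ^ 2) • ((U ζ - c : ℝ) : ℂ)
  have hrep : deriv F z = circleAverage φ 0 1 := by
    rw [← deriv_sub_const (f := F) (c : ℂ)]
    exact deriv_eq_circleAverage_of_re_eq (U := fun ζ ↦ U ζ - c) (hF.sub_const _)
      (hU.sub continuousOn_const) (fun w hw ↦ by rw [sub_re, ofReal_re, hFU w hw]) hz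
  set b : ℝ → ℝ := fun s ↦ 2 * A * (|s| ^ α / max δ (|s| / π) ^ 2)
  have hb : IntervalIntegrable b MeasureTheory.volume (-π) π := by
    refine (Continuous.intervalIntegrable ?_ _ _)
    refine continuous_const.mul (Continuous.div (by fun_prop (disch := exact fun _ ↦ Or.inr hα0))
      (by fun_prop) fun s ↦ (pow_pos (lt_max_of_lt_left hδ0) 2).ne')
  have hpoint : ∀ s ∈ Icc (-π) π, ‖φ (circleMap 0 1 (arg z + s))‖ ≤ b s := by
    intro s hs
    simp only [φ, circleMap, ofReal_one, one_mul, zero_add, norm_smul, Complex.norm_real,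
      Real.norm_eq_abs]
    have hdiff := hholder (arg z + s) (arg z)
    rw [add_sub_cancel_left] at hdiff
    calc _ ≤ 2 / max δ (|s| / π) ^ 2 * (A * |s| ^ α) :=
          mul_le_mul (norm_two_mul_div_sub_sq_le hz1 (abs_le.2 hs)) hdiff
            (abs_nonneg _) (by positivity)
      _ = b s := by ring
  calc ‖deriv F z‖ ≤ (2 * π)⁻¹ * ∫ s in (-π)..π, b s :=
        hrep ▸ norm_circleAverage_le_integral (arg z) hb hpoint
    _ = (2 * π)⁻¹ * (2 * A) * ∫ s in (-π)..π, |s| ^ α / max δ (|s| / π) ^ 2 := by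
        rw [intervalIntegral.integral_const_mul]
        ring
    _ ≤ (2 * π)⁻¹ * (2 * A) * (2 * (1 + π ^ 2 / (1 - α)) * δ ^ (α - 1)) := by
        gcongr
        exact integral_abs_rpow_div_max_sq_le hα0 hα1 hδ0 hδπ
    _ = 2 * A * (1 + π ^ 2 / (1 - α)) / π * δ ^ (α - 1) := by
        field_simp

theorem stmt10_general (α : ℝ) (hα0 : 0 < α) (hα1 : α < 1)
    (h g : ℂ → ℂ) (k : ℝ) (hk1 : k < 1)
    (hh : DifferentiableOn ℂ h (ball (0:ℂ) 1))
    (hg : DifferentiableOn ℂ g (ball (0:ℂ) 1))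
    (hqr : ∀ z ∈ ball (0:ℂ) 1, ‖deriv g z‖ ≤ k * ‖deriv h z‖)
    (U : ℂ → ℝ) (A : ℝ) (hA : 0 < A)
    (hUcont : ContinuousOn U (closedBall (0:ℂ) 1))
    (hUeq : ∀ z ∈ ball (0:ℂ) 1, U z = (h z + (starRingEnd ℂ) (g z)).re)
    (hUHolder : ∀ s t : ℝ,
      |U (Complex.exp (s * Complex.I)) - U (Complex.exp (t * Complex.I))| ≤ A * |s - t| ^ α) :
    ∃ C > 0, ∀ z ∈ ball (0:ℂ) 1,
      ‖deriv h z‖ ≤ C * (1 - ‖z‖) ^ (α - 1) ∧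
      ‖deriv g z‖ ≤ C * (1 - ‖z‖) ^ (α - 1) := by
  set C₀ := 2 * A * (1 + π ^ 2 / (1 - α)) / π
  have hα : 0 < 1 - α := by linarith
  have hk : 0 < 1 - k := by linarith
  refine ⟨C₀ / (1 - k), by positivity, fun z hz ↦ ?_⟩
  have hre : ∀ w ∈ ball (0 : ℂ) 1, ((h + g) w).re = U w := fun w hw ↦ by simp [hUeq w hw]
  have hsum := norm_deriv_le_of_re_eq_of_holder hα0.le hα1 hA.le (hh.add hg) hUcont hre
    hUHolder hz
  have hzn := isOpen_ball.mem_nhds hz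
  rw [deriv_add (hh.differentiableAt hzn) (hg.differentiableAt hzn)] at hsum
  have hg' := hqr z hz
  have hh' : ‖deriv h z‖ ≤ C₀ / (1 - k) * (1 - ‖z‖) ^ (α - 1) := by
    rw [div_mul_eq_mul_div, le_div_iff₀ hk]
    have := norm_sub_norm_le (deriv h z) (-deriv g z)
    rw [norm_neg, sub_neg_eq_add] at this
    linarith
  exact ⟨hh', hg'.trans (by nlinarith [norm_nonneg (deriv h z)])⟩

theorem stmt10 (α : ℝ) (hα0 : 0 < α) (hα1 : α < 1)
    (h g : ℂ → ℂ) (k : ℝ) (hk0 : 0 ≤ k) (hk1 : k < 1)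
    (hh : DifferentiableOn ℂ h (ball (0:ℂ) 1))
    (hg : DifferentiableOn ℂ g (ball (0:ℂ) 1))
    (hqr : ∀ z ∈ ball (0:ℂ) 1, ‖deriv g z‖ ≤ k * ‖deriv h z‖)
    (U : ℂ → ℝ) (A : ℝ) (hA : 0 < A)
    (hUcont : ContinuousOn U (closedBall (0:ℂ) 1))
    (hUeq : ∀ z ∈ ball (0:ℂ) 1, U z = (h z + (starRingEnd ℂ) (g z)).re)
    (hUHolder : ∀ s t : ℝ,
      |U (Complex.exp (s * Complex.I)) - U (Complex.exp (t * Complex.I))| ≤ A * |s - t| ^ α) :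
    ∃ C > 0, ∀ z ∈ ball (0:ℂ) 1,
      ‖deriv h z‖ ≤ C * (1 - ‖z‖) ^ (α - 1) ∧
      ‖deriv g z‖ ≤ C * (1 - ‖z‖) ^ (α - 1) :=
  stmt10_general α hα0 hα1 h g k hk1 hh hg hqr U A hA hUcont hUeq hUHolder
end
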